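/- For every integer m ≥ 2, the set Shed(P_m) is not a dominating set of the graph P_m. -/

import Mathlib

open scoped Classical

variable {V : Type*}

/-- `S` is an independent set of the induced subgraph of `G` on the vertex set `A`. -/
def IsIndepIn (G : SimpleGraph V) (A S : Finset V) : Prop :=
  S ⊆ A ∧ ∀ u ∈ S, ∀ v ∈ S, ¬ G.Adj u v

/-- `S` is a maximal independent set of the induced subgraph of `G` on the vertex set `A`. -/
def IsMaxIndepIn (G : SimpleGraph V) (A S : Finset V) : Prop :=
  IsIndepIn G A S ∧ ∀ T, IsIndepIn G A T → S ⊆ T → T = S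

/-- The induced subgraph of `G` on the vertex set `A` is well-covered: all of its
maximal independent sets have the same cardinality. -/
def WellCoveredOn (G : SimpleGraph V) (A : Finset V) : Prop :=
  ∀ S T, IsMaxIndepIn G A S → IsMaxIndepIn G A T → S.card = T.card

/-- The closed neighbourhood of `x` deleted from `A`: the vertices of `A` distinct from `x`
and not adjacent to `x`. -/
noncomputable def delClosedNbhd (G : SimpleGraph V) (A : Finset V) (x : V) : Finset V :=
  A.filter fun y => y ≠ x ∧ ¬ G.Adj x y

/-- The induced subgraph of `G` on the vertex set `A` is vertex decomposable: it is
well-covered, and either it has no edges, or some vertex `x ∈ A` is such that deleting `x`,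
respectively the closed neighbourhood of `x`, leaves a vertex decomposable graph. -/
def VertexDecomposableOn (G : SimpleGraph V) (A : Finset V) : Prop :=
  WellCoveredOn G A ∧
    ((∀ u ∈ A, ∀ v ∈ A, ¬ G.Adj u v) ∨
      ∃ x, ∃ _h : x ∈ A,
        VertexDecomposableOn G (A.erase x) ∧
        VertexDecomposableOn G (delClosedNbhd G A x))
termination_by A.card
decreasing_by
  · exact Finset.card_erase_lt_of_mem (by assumption)
  · exact Finset.card_lt_card
      (Finset.filter_ssubset.mpr ⟨x, by assumption, by simp⟩)

/-- A finite simple graph is well-covered if all of its maximal independent sets have the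
same cardinality. -/
def WellCovered (G : SimpleGraph V) [Fintype V] : Prop :=
  WellCoveredOn G Finset.univ

/-- A finite simple graph is vertex decomposable. -/
def VertexDecomposable (G : SimpleGraph V) [Fintype V] : Prop :=
  VertexDecomposableOn G Finset.univ

/-- The set of shedding vertices of `G` : those vertices `x` such that both `G \ x` and
`G \ N[x]` are vertex decomposable. -/
def Shed (G : SimpleGraph V) [Fintype V] : Set V :=
  {x | VertexDecomposableOn G (Finset.univ.erase x) ∧
       VertexDecomposableOn G (delClosedNbhd G Finset.univ x)}

/-- `D` is a dominating set of `G`: every vertex not in `D` is adjacent to a vertex of `D`. -/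
def IsDominatingSet (G : SimpleGraph V) (D : Set V) : Prop :=
  ∀ v, v ∉ D → ∃ u ∈ D, G.Adj u v

/-- A vertex is simplicial if its neighbourhood induces a clique. -/
def IsSimplicialVertex (G : SimpleGraph V) (x : V) : Prop :=
  ∀ u v, G.Adj x u → G.Adj x v → u ≠ v → G.Adj u v

/-- The graph `P_m` on the vertex set `X ⊕ Y ⊕ Z` with `X = Fin (2*m)`, `Y = Fin 2`,
`Z = Fin 3` (all 0-indexed, so the paper's `x_j`, `y_j`, `z_j` are indices `j - 1`).
Its edges are exactly: `X` induces the complete `m`-partite graph `K_{2,…,2}` whose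
complement is the matching pairing `x_{2i}` with `x_{2i+1}`; `y_0` is adjacent to `z_0`
and to every even-indexed vertex of `X`; `y_1` is adjacent to `z_1` and to every
odd-indexed vertex of `X`; and `Z` induces a complete graph `K_3`. -/
def Pgraph (m : ℕ) : SimpleGraph (Fin (2 * m) ⊕ Fin 2 ⊕ Fin 3) :=
  SimpleGraph.fromRel fun p q =>
    match p, q with
    | Sum.inl a, Sum.inl b => a.val / 2 ≠ b.val / 2
    | Sum.inr (Sum.inl y), Sum.inl a => a.val % 2 = y.val
    | Sum.inr (Sum.inl y), Sum.inr (Sum.inr z) => y.val = z.val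
    | Sum.inr (Sum.inr z), Sum.inr (Sum.inr w) => z ≠ w
    | _, _ => False

/-!
The vertex `x₀` is not dominated by the shedding vertices: its neighbours are the vertices of
`X` other than its partner `x₁`, together with `y₀`, and none of them is a shedding vertex.

Deleting a vertex `x_j` of `X` destroys well-coveredness. If `x_{j'}` is the partner of `x_j`,
`{x_a, x_b}` another pair of partners (it exists as `m ≥ 2`) and `R` a maximal independent set
of the `Z`-part containing `z_{j mod 2}` if present, then `R ∪ {x_{j'}}` and `R ∪ {x_a, x_b}`
are maximal independent sets of different sizes: `x_{j'}` dominates `X` and `y_{j' mod 2}`,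
and `R` takes care of `y_{j mod 2}`.

Deleting `y₀` leaves a graph that is still well-covered but not vertex decomposable. By
induction, no vertex set `A ⊇ X` with `y₀ ∉ A` and `y₁ ∈ A → z₁ ∈ A` is vertex decomposable:
deleting an `X`-vertex destroys well-coveredness by the argument above, while deleting `y₁` or
a `Z`-vertex, or deleting `N[z₁]` when `y₁ ∈ A`, stays within the family.
-/

open Finset

section IndependentSets

variable {G : SimpleGraph V} {A S : Finset V}

theorem isIndepIn_insert {v : V} :
    IsIndepIn G A (insert v S) ↔ v ∈ A ∧ IsIndepIn G A S ∧ ∀ u ∈ S, ¬ G.Adj v u := by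
  constructor
  · rintro ⟨hA, h⟩
    refine ⟨hA (mem_insert_self _ _), ⟨(subset_insert _ _).trans hA, ?_⟩, ?_⟩
    · exact fun u hu w hw => h u (mem_insert_of_mem hu) w (mem_insert_of_mem hw)
    · exact fun u hu => h v (mem_insert_self _ _) u (mem_insert_of_mem hu)
  · rintro ⟨hv, ⟨hSA, hS⟩, hvS⟩
    refine ⟨insert_subset hv hSA, ?_⟩
    simp only [mem_insert]
    rintro u (rfl | hu) w (rfl | hw) huw
    · exact G.irrefl huw
    · exact hvS w hw huw
    · exact hvS u hu huw.symm
    · exact hS u hu w hw huw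

theorem isMaxIndepIn_iff :
    IsMaxIndepIn G A S ↔ IsIndepIn G A S ∧ ∀ v ∈ A, v ∉ S → ∃ u ∈ S, G.Adj u v := by
  refine ⟨fun ⟨hS, hmax⟩ => ⟨hS, fun v hvA hvS => ?_⟩, fun ⟨hS, hdom⟩ => ⟨hS, ?_⟩⟩
  · by_contra! hv
    have hins := isIndepIn_insert.2 ⟨hvA, hS, fun u hu huv => hv u hu huv.symm⟩
    exact hvS (hmax _ hins (subset_insert v S) ▸ mem_insert_self v S)
  · rintro T ⟨hTA, hT⟩ hST
    refine (hST.antisymm fun w hwT => ?_).symm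
    by_contra hwS
    obtain ⟨u, huS, huw⟩ := hdom w (hTA hwT) hwS
    exact hT u (hST huS) w hwT huw

theorem IsIndepIn.exists_isMaxIndepIn_superset {I : Finset V} (hI : IsIndepIn G A I) :
    ∃ S, IsMaxIndepIn G A S ∧ I ⊆ S := by
  obtain ⟨S, hS, hmax⟩ := exists_max_image
    (A.powerset.filter fun S => IsIndepIn G A S ∧ I ⊆ S) card ⟨I, by simp [hI, hI.1]⟩
  simp only [mem_filter, mem_powerset] at hS hmax
  refine ⟨S, ⟨hS.2.1, fun T hT hST => ?_⟩, hS.2.2⟩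
  exact (eq_of_subset_of_card_le hST (hmax T ⟨hT.1, hT, hS.2.2.trans hST⟩)).symm

theorem VertexDecomposableOn.wellCoveredOn (h : VertexDecomposableOn G A) :
    WellCoveredOn G A := by
  rw [VertexDecomposableOn] at h
  exact h.1

theorem not_vertexDecomposableOn_of_adj_of_forall {u v : V} (hu : u ∈ A) (hv : v ∈ A)
    (huv : G.Adj u v)
    (h : ∀ x ∈ A, ¬ VertexDecomposableOn G (A.erase x) ∨
      ¬ VertexDecomposableOn G (delClosedNbhd G A x)) :
    ¬ VertexDecomposableOn G A := by
  rw [VertexDecomposableOn]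
  rintro ⟨-, hno | ⟨x, hx, hdel, hnbhd⟩⟩
  · exact hno u hu v hv huv
  · exact (h x hx).elim (· hdel) (· hnbhd)

@[simp]
theorem mem_delClosedNbhd {x y : V} :
    y ∈ delClosedNbhd G A x ↔ y ∈ A ∧ y ≠ x ∧ ¬ G.Adj x y := by
  simp [delClosedNbhd]

end IndependentSets

namespace Pgraph

variable {m : ℕ}

-- `Shed` and `VertexDecomposableOn` erase vertices with the classical `DecidableEq` (they are
-- stated for an arbitrary vertex type); using it here too keeps `Finset.erase` syntactically equal.
noncomputable local instance : DecidableEq (Fin (2 * m) ⊕ Fin 2 ⊕ Fin 3) := Classical.decEq _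

@[simp]
theorem adj_inl_inl {a b : Fin (2 * m)} :
    (Pgraph m).Adj (Sum.inl a) (Sum.inl b) ↔ a.val / 2 ≠ b.val / 2 := by
  simp [Pgraph]
  omega

@[simp]
theorem adj_inl_inr_inl {a : Fin (2 * m)} {b : Fin 2} :
    (Pgraph m).Adj (Sum.inl a) (Sum.inr (Sum.inl b)) ↔ a.val % 2 = b.val := by
  simp [Pgraph]

@[simp]
theorem adj_inr_inl_inl {a : Fin (2 * m)} {b : Fin 2} :
    (Pgraph m).Adj (Sum.inr (Sum.inl b)) (Sum.inl a) ↔ a.val % 2 = b.val := by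
  simp [Pgraph]

@[simp]
theorem adj_inr_inr_inr_inl {b : Fin 2} {t : Fin 3} :
    (Pgraph m).Adj (Sum.inr (Sum.inr t)) (Sum.inr (Sum.inl b)) ↔ b.val = t.val := by
  simp [Pgraph]

@[simp]
theorem not_adj_inl_inr_inr {a : Fin (2 * m)} {t : Fin 3} :
    ¬ (Pgraph m).Adj (Sum.inl a) (Sum.inr (Sum.inr t)) := by
  simp [Pgraph]

@[simp]
theorem not_adj_inr_inr_inl {a : Fin (2 * m)} {t : Fin 3} :
    ¬ (Pgraph m).Adj (Sum.inr (Sum.inr t)) (Sum.inl a) := by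
  simp [Pgraph]

noncomputable def zPart (A : Finset (Fin (2 * m) ⊕ Fin 2 ⊕ Fin 3)) :
    Finset (Fin (2 * m) ⊕ Fin 2 ⊕ Fin 3) :=
  A.filter fun v => ∃ t, v = Sum.inr (Sum.inr t)

variable {A R : Finset (Fin (2 * m) ⊕ Fin 2 ⊕ Fin 3)}

@[simp]
theorem mem_zPart {v : Fin (2 * m) ⊕ Fin 2 ⊕ Fin 3} :
    v ∈ zPart A ↔ v ∈ A ∧ ∃ t, v = Sum.inr (Sum.inr t) := by
  simp [zPart]

theorem inl_notMem_of_subset_zPart (hR : R ⊆ zPart A) (a : Fin (2 * m)) : Sum.inl a ∉ R :=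
  fun ha => by simpa using hR ha

theorem not_adj_inl_of_subset_zPart (hR : R ⊆ zPart A) (a : Fin (2 * m)) :
    ∀ u ∈ R, ¬ (Pgraph m).Adj (Sum.inl a) u := by
  intro u hu
  obtain ⟨-, t, rfl⟩ := mem_zPart.1 (hR hu)
  exact not_adj_inl_inr_inr

theorem isMaxIndepIn_insert_partner {j j' : Fin (2 * m)} (hjj' : j ≠ j')
    (hpair : j.val / 2 = j'.val / 2) (hX : ∀ k, Sum.inl k ∈ A ↔ k ≠ j)
    (hR : IsMaxIndepIn (Pgraph m) (zPart A) R)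
    (hy : ∀ b : Fin 2, b.val = j.val % 2 → Sum.inr (Sum.inl b) ∈ A →
      Sum.inr (Sum.inr b.castSucc) ∈ R) :
    IsMaxIndepIn (Pgraph m) A (insert (Sum.inl j') R) := by
  have hj' : j'.val ≠ j.val := fun h => hjj' (Fin.ext h).symm
  rw [isMaxIndepIn_iff] at hR ⊢
  obtain ⟨⟨hRZ, hRind⟩, hRdom⟩ := hR
  refine ⟨isIndepIn_insert.2 ⟨(hX j').2 hjj'.symm, ⟨hRZ.trans (filter_subset _ _), hRind⟩,
    not_adj_inl_of_subset_zPart hRZ j'⟩, ?_⟩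
  rintro (k | b | t) hvA hvS
  · refine ⟨Sum.inl j', mem_insert_self _ _, ?_⟩
    have hkj := Fin.val_ne_of_ne ((hX k).1 hvA)
    have hkj' : k.val ≠ j'.val := fun h => hvS (by simp [Fin.ext h])
    simp only [adj_inl_inl]
    omega
  · by_cases hb : b.val = j.val % 2
    · exact ⟨_, mem_insert_of_mem (hy b hb hvA), by simp⟩
    · refine ⟨Sum.inl j', mem_insert_self _ _, ?_⟩
      simp only [adj_inl_inr_inl]
      omega
  · obtain ⟨u, hu, hut⟩ := hRdom _ (mem_zPart.2 ⟨hvA, t, rfl⟩) (fun h => hvS (mem_insert_of_mem h))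
    exact ⟨u, mem_insert_of_mem hu, hut⟩

theorem isMaxIndepIn_insert_insert {a b : Fin (2 * m)} (hab : a ≠ b)
    (hpair : a.val / 2 = b.val / 2) (ha : Sum.inl a ∈ A) (hb : Sum.inl b ∈ A)
    (hR : IsMaxIndepIn (Pgraph m) (zPart A) R) :
    IsMaxIndepIn (Pgraph m) A (insert (Sum.inl a) (insert (Sum.inl b) R)) := by
  have hab' : a.val ≠ b.val := Fin.val_ne_of_ne hab
  rw [isMaxIndepIn_iff] at hR ⊢
  obtain ⟨⟨hRZ, hRind⟩, hRdom⟩ := hR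
  have hbR := isIndepIn_insert.2 ⟨hb, ⟨hRZ.trans (filter_subset _ _), hRind⟩,
    not_adj_inl_of_subset_zPart hRZ b⟩
  refine ⟨isIndepIn_insert.2 ⟨ha, hbR, ?_⟩, ?_⟩
  · simp only [mem_insert, forall_eq_or_imp, adj_inl_inl, hpair, ne_eq, not_true_eq_false,
      not_false_eq_true, true_and]
    exact not_adj_inl_of_subset_zPart hRZ a
  · rintro (k | c | t) hvA hvS
    · refine ⟨Sum.inl a, mem_insert_self _ _, ?_⟩
      have hka : k.val ≠ a.val := fun h => hvS (by simp [Fin.ext h])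
      have hkb : k.val ≠ b.val := fun h => hvS (by simp [Fin.ext h])
      simp only [adj_inl_inl]
      omega
    · by_cases hc : a.val % 2 = c.val
      · exact ⟨Sum.inl a, mem_insert_self _ _, by simpa using hc⟩
      · refine ⟨Sum.inl b, by simp, ?_⟩
        simp only [adj_inl_inr_inl]
        omega
    · obtain ⟨u, hu, hut⟩ := hRdom _ (mem_zPart.2 ⟨hvA, t, rfl⟩)
        (fun h => hvS (mem_insert_of_mem (mem_insert_of_mem h)))
      exact ⟨u, mem_insert_of_mem (mem_insert_of_mem hu), hut⟩

theorem not_wellCoveredOn_of_inl_mem_iff (hm : 2 ≤ m) {j : Fin (2 * m)}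
    (hX : ∀ k, Sum.inl k ∈ A ↔ k ≠ j)
    (hYZ : ∀ b : Fin 2, Sum.inr (Sum.inl b) ∈ A → Sum.inr (Sum.inr b.castSucc) ∈ A) :
    ¬ WellCoveredOn (Pgraph m) A := by
  obtain ⟨j', hjj', hpair⟩ : ∃ j' : Fin (2 * m), j ≠ j' ∧ j.val / 2 = j'.val / 2 :=
    ⟨⟨2 * (j.val / 2) + (1 - j.val % 2), by omega⟩, fun h => by simp only [Fin.ext_iff] at h; omega,
      by simp only; omega⟩
  obtain ⟨a, b, hab, hab2, haj, hbj⟩ : ∃ a b : Fin (2 * m),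
      a ≠ b ∧ a.val / 2 = b.val / 2 ∧ a ≠ j ∧ b ≠ j := by
    by_cases hj : j.val < 2
    · exact ⟨⟨2, by omega⟩, ⟨3, by omega⟩, by simp [Fin.ext_iff], by simp,
        by simp [Fin.ext_iff]; omega, by simp [Fin.ext_iff]; omega⟩
    · exact ⟨⟨0, by omega⟩, ⟨1, by omega⟩, by simp [Fin.ext_iff], by simp,
        by simp [Fin.ext_iff]; omega, by simp [Fin.ext_iff]; omega⟩
  set z : Fin (2 * m) ⊕ Fin 2 ⊕ Fin 3 := Sum.inr (Sum.inr ⟨j.val % 2, by omega⟩)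
  have hI : IsIndepIn (Pgraph m) (zPart A) ((zPart A).filter (· = z)) := by
    refine ⟨filter_subset _ _, ?_⟩
    simp only [mem_filter]
    rintro u ⟨-, rfl⟩ v ⟨-, rfl⟩
    exact (Pgraph m).irrefl
  obtain ⟨R, hR, hzR⟩ := hI.exists_isMaxIndepIn_superset
  have hS := isMaxIndepIn_insert_partner hjj' hpair hX hR fun c hc hcA =>
    hzR (mem_filter.2 ⟨mem_zPart.2 ⟨hYZ c hcA, _, rfl⟩, by simp [z, Fin.ext_iff, hc]⟩)
  have hT := isMaxIndepIn_insert_insert hab hab2 ((hX a).2 haj) ((hX b).2 hbj) hR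
  have hxR := inl_notMem_of_subset_zPart hR.1.1
  intro hwc
  have hcard := hwc _ _ hS hT
  rw [card_insert_of_notMem (hxR _), card_insert_of_notMem (by simp [hxR, hab]),
    card_insert_of_notMem (hxR _)] at hcard
  omega

theorem not_vertexDecomposableOn_of_forall_inl_mem (hm : 2 ≤ m) (hX : ∀ k, Sum.inl k ∈ A)
    (hy₀ : Sum.inr (Sum.inl 0) ∉ A)
    (hy₁ : Sum.inr (Sum.inl 1) ∈ A → Sum.inr (Sum.inr 1) ∈ A) :
    ¬ VertexDecomposableOn (Pgraph m) A := by
  induction A using Finset.strongInduction with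
  | H A ih =>
  have ih_erase : ∀ v ∈ A, (∀ k, v ≠ Sum.inl k) →
      (Sum.inr (Sum.inl 1) ∈ A.erase v → Sum.inr (Sum.inr 1) ∈ A.erase v) →
      ¬ VertexDecomposableOn (Pgraph m) (A.erase v) := fun v hv hvX =>
    ih _ (erase_ssubset hv) (fun k => mem_erase.2 ⟨(hvX k).symm, hX k⟩)
      (fun h => hy₀ (mem_of_mem_erase h))
  refine not_vertexDecomposableOn_of_adj_of_forall (hX ⟨0, by omega⟩) (hX ⟨2, by omega⟩)
    (by simp) ?_
  rintro (a | b | t) hv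
  · refine Or.inl fun h => not_wellCoveredOn_of_inl_mem_iff hm (j := a) ?_ ?_ h.wellCoveredOn
    · simp [hX]
    · intro b hb
      fin_cases b
      · exact absurd (mem_of_mem_erase hb) hy₀
      · simpa using hy₁ (mem_of_mem_erase hb)
  · fin_cases b
    · exact absurd hv hy₀
    · exact Or.inl (ih_erase _ hv (by simp) (by simp))
  · by_cases ht : t = 1 ∧ Sum.inr (Sum.inl 1) ∈ A
    · obtain ⟨rfl, -⟩ := ht
      refine Or.inr (ih _ (filter_ssubset.2 ⟨_, hv, by simp⟩) (by simp [hX]) ?_ (by simp))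
      exact fun h => hy₀ (mem_filter.1 h).1
    · refine Or.inl (ih_erase _ hv (by simp) fun h => ?_)
      have hy := mem_of_mem_erase h
      exact mem_erase.2 ⟨fun h1 => ht ⟨by simpa [eq_comm] using h1, hy⟩, hy₁ hy⟩

theorem inl_notMem_shed (hm : 2 ≤ m) (a : Fin (2 * m)) : Sum.inl a ∉ Shed (Pgraph m) :=
  fun h => not_wellCoveredOn_of_inl_mem_iff hm (j := a) (by simp) (by simp) h.1.wellCoveredOn

theorem inr_inl_zero_notMem_shed (hm : 2 ≤ m) : Sum.inr (Sum.inl 0) ∉ Shed (Pgraph m) :=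
  fun h => not_vertexDecomposableOn_of_forall_inl_mem hm (by simp) (by simp) (by simp) h.1

end Pgraph

/-- For every `m ≥ 2`, the set of shedding vertices of `P_m` is not a
dominating set of `P_m`. -/
theorem statement17 (m : ℕ) (hm : 2 ≤ m) :
    ¬ IsDominatingSet (Pgraph m) (Shed (Pgraph m)) := by
  intro hdom
  obtain ⟨u, hu, hadj⟩ := hdom (Sum.inl ⟨0, by omega⟩) (Pgraph.inl_notMem_shed hm _)
  rcases u with a | b | t
  · exact Pgraph.inl_notMem_shed hm a hu
  · fin_cases b
    · exact Pgraph.inr_inl_zero_notMem_shed hm hu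
    · simp at hadj
  · simp at hadj
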